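/- arXiv:0811.3075 — 5 statements merged into one kernel-verified Lean document; each statement's English description precedes it below -/
import Mathlib

section
/- Let f : [0,∞) → ℝ be right-continuous with left limits and satisfy f(0) = 0. For x > 0 set τ(x) = inf{t > 0 : f(t) > x}, and whenever τ(x) < ∞ define U(x) = x − sup{f(s) : 0 ≤ s < τ(x)} (undershoot of the previous supremum), V(x) = x − f(τ(x)−) where f(τ(x)−) is the left limit of f at τ(x) (undershoot), and O(x) = f(τ(x)) − x (overshoot). Then for every x > 0 with τ(x) < ∞ and all real numbers u, v, w with 0 ≤ u < x, v ≥ u and w ≥ 0 (noting τ(x−u) ≤ τ(x) < ∞), the following equivalence of events holds pathwise: [U(x) > u and V(x) > v and O(x) > w] if and only if [U(x−u) > 0 and V(x−u) > v−u and O(x−u) > w+u]. Moreover, in the forward direction one in fact has τ(x−u) = τ(x). -/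
open Set Function

/-- First passage time of `f` above level `x` (finite iff `hitsAbove f x`). -/
noncomputable def tauPass (f : ℝ → ℝ) (x : ℝ) : ℝ := sInf {t : ℝ | 0 < t ∧ x < f t}

/-- The event that `f` passes above the level `x` at a finite time, i.e. `τ(x) < ∞`. -/
def hitsAbove (f : ℝ → ℝ) (x : ℝ) : Prop := {t : ℝ | 0 < t ∧ x < f t}.Nonempty

/-- Undershoot of the previous supremum:
`U(x) = x - sup {f s : 0 ≤ s < τ(x)}`. -/
noncomputable def Ushoot (f : ℝ → ℝ) (x : ℝ) : ℝ :=
  x - sSup (f '' Ico 0 (tauPass f x))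

/-- Undershoot: `V(x) = x - f(τ(x)-)`, using the left limit of `f` at `τ(x)`. -/
noncomputable def Vshoot (f : ℝ → ℝ) (x : ℝ) : ℝ :=
  x - Function.leftLim f (tauPass f x)

/-- Overshoot: `O(x) = f(τ(x)) - x`. -/
noncomputable def Oshoot (f : ℝ → ℝ) (x : ℝ) : ℝ :=
  f (tauPass f x) - x

/-!
On the event `U(x) > u, O(x) > w ≥ 0` the path stays below `x - u` on `[0, τ(x))` and jumps
above `x` at `τ(x)`, so it first passes `x - u` at the same time `τ(x)`. Conversely, an overshoot
`O(x - u) > w + u ≥ u` means that at `τ(x - u)` the path is already above `x`, which again forces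
`τ(x - u) = τ(x)`. Once the two passage times agree, `U`, `V` and `O` at the two levels differ by
exactly `u`.
-/

section FirstPassage

variable {f : ℝ → ℝ} {x y s : ℝ}

lemma bddBelow_passageSet (f : ℝ → ℝ) (x : ℝ) : BddBelow {t : ℝ | 0 < t ∧ x < f t} :=
  ⟨0, fun _ ht => ht.1.le⟩

lemma hitsAbove.mono_level (h : hitsAbove f x) (hyx : y ≤ x) : hitsAbove f y :=
  let ⟨t, ht, hft⟩ := h
  ⟨t, ht, hyx.trans_lt hft⟩

lemma tauPass_mono (h : hitsAbove f x) (hyx : y ≤ x) : tauPass f y ≤ tauPass f x :=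
  csInf_le_csInf (bddBelow_passageSet f y) h fun _ ⟨ht, hft⟩ => ⟨ht, hyx.trans_lt hft⟩

lemma tauPass_le (hs : 0 < s) (hfs : x < f s) : tauPass f x ≤ s :=
  csInf_le (bddBelow_passageSet f x) ⟨hs, hfs⟩

lemma le_tauPass (h : hitsAbove f x) (hbelow : ∀ t ∈ Ioo 0 s, f t ≤ x) : s ≤ tauPass f x :=
  le_csInf h fun t ⟨ht, hft⟩ => not_lt.mp fun hts => (hbelow t ⟨ht, hts⟩).not_gt hft

lemma tauPass_eq_of_forall_le (hs : 0 < s) (hfs : x < f s) (hbelow : ∀ t ∈ Ioo 0 s, f t ≤ x) :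
    tauPass f x = s :=
  (tauPass_le hs hfs).antisymm (le_tauPass ⟨s, hs, hfs⟩ hbelow)

lemma tauPass_pos (hf0 : f 0 = 0) (hrc : ContinuousWithinAt f (Ici 0) 0) (hx : 0 < x)
    (h : hitsAbove f x) : 0 < tauPass f x := by
  have hnear : f ⁻¹' Iio x ∈ nhdsWithin 0 (Ici 0) := hrc (by rw [hf0]; exact Iio_mem_nhds hx)
  obtain ⟨b, hb, hsub⟩ := (nhdsGE_basis_Ico (0 : ℝ)).mem_iff.mp hnear
  exact hb.trans_le (le_tauPass h fun t ht => (hsub ⟨ht.1.le, ht.2⟩).le)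

lemma apply_le_of_mem_Ico_tauPass (hf0 : f 0 = 0) (hx : 0 ≤ x) (hs : s ∈ Ico 0 (tauPass f x)) :
    f s ≤ x := by
  rcases hs.1.eq_or_lt with rfl | hpos
  · rwa [hf0]
  · exact not_lt.mp fun hfs => (tauPass_le hpos hfs).not_gt hs.2

lemma bddAbove_image_Ico_tauPass (hf0 : f 0 = 0) (hx : 0 ≤ x) :
    BddAbove (f '' Ico 0 (tauPass f x)) :=
  ⟨x, forall_mem_image.mpr fun _ hs => apply_le_of_mem_Ico_tauPass hf0 hx hs⟩

lemma tauPass_eq_of_sSup_lt (hf0 : f 0 = 0) (hx : 0 ≤ x) (hpos : 0 < tauPass f x)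
    (hsup : sSup (f '' Ico 0 (tauPass f x)) < y) (hover : y < f (tauPass f x)) :
    tauPass f y = tauPass f x :=
  tauPass_eq_of_forall_le hpos hover fun _ ht =>
    (le_csSup (bddAbove_image_Ico_tauPass hf0 hx)
      (mem_image_of_mem f (Ioo_subset_Ico_self ht))).trans hsup.le

lemma shoots_of_tauPass_eq (h : tauPass f y = tauPass f x) :
    Ushoot f y = Ushoot f x - (x - y) ∧ Vshoot f y = Vshoot f x - (x - y) ∧
      Oshoot f y = Oshoot f x + (x - y) := by
  simp only [Ushoot, Vshoot, Oshoot, h]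
  refine ⟨?_, ?_, ?_⟩ <;> ring

end FirstPassage

theorem statement0_general (f : ℝ → ℝ)
    (hf_rc : ∀ t : ℝ, 0 ≤ t → ContinuousWithinAt f (Ici t) t)
    (hf0 : f 0 = 0)
    (x : ℝ) (hx : 0 < x) (hhit : hitsAbove f x)
    (u v w : ℝ) (hu0 : 0 ≤ u) (hux : u < x) (hw : 0 ≤ w) :
    hitsAbove f (x - u) ∧ tauPass f (x - u) ≤ tauPass f x ∧
    ((u < Ushoot f x ∧ v < Vshoot f x ∧ w < Oshoot f x) ↔
      (0 < Ushoot f (x - u) ∧ v - u < Vshoot f (x - u) ∧ w + u < Oshoot f (x - u))) ∧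
    ((u < Ushoot f x ∧ v < Vshoot f x ∧ w < Oshoot f x) →
      tauPass f (x - u) = tauPass f x) := by
  have hlevel : x - u ≤ x := by linarith
  have hhit' : hitsAbove f (x - u) := hhit.mono_level hlevel
  have hle : tauPass f (x - u) ≤ tauPass f x := tauPass_mono hhit hlevel
  have key : (u < Ushoot f x ∧ v < Vshoot f x ∧ w < Oshoot f x) →
      tauPass f (x - u) = tauPass f x := fun ⟨hU, _, hO⟩ =>
    tauPass_eq_of_sSup_lt hf0 hx.le (tauPass_pos hf0 (hf_rc 0 le_rfl) hx hhit)
      (by unfold Ushoot at hU; linarith) (by unfold Oshoot at hO; linarith)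
  refine ⟨hhit', hle, ⟨fun h => ?_, fun ⟨hU', hV', hO'⟩ => ?_⟩, key⟩
  · obtain ⟨hU, hV, hO⟩ := shoots_of_tauPass_eq (key h)
    obtain ⟨hU', hV', hO'⟩ := h
    refine ⟨?_, ?_, ?_⟩ <;> linarith
  · have hpos : 0 < tauPass f (x - u) := tauPass_pos hf0 (hf_rc 0 le_rfl) (by linarith) hhit'
    have hover : x < f (tauPass f (x - u)) := by unfold Oshoot at hO'; linarith
    obtain ⟨hU, hV, hO⟩ := shoots_of_tauPass_eq (hle.antisymm (tauPass_le hpos hover))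
    refine ⟨?_, ?_, ?_⟩ <;> linarith

theorem statement0 (f : ℝ → ℝ)
    (hf_rc : ∀ t : ℝ, 0 ≤ t → ContinuousWithinAt f (Ici t) t)
    (hf_ll : ∀ t : ℝ, 0 < t → ∃ l : ℝ, Filter.Tendsto f (nhdsWithin t (Iio t)) (nhds l))
    (hf0 : f 0 = 0)
    (x : ℝ) (hx : 0 < x) (hhit : hitsAbove f x)
    (u v w : ℝ) (hu0 : 0 ≤ u) (hux : u < x) (huv : u ≤ v) (hw : 0 ≤ w) :
    hitsAbove f (x - u) ∧ tauPass f (x - u) ≤ tauPass f x ∧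
    ((u < Ushoot f x ∧ v < Vshoot f x ∧ w < Oshoot f x) ↔
      (0 < Ushoot f (x - u) ∧ v - u < Vshoot f (x - u) ∧ w + u < Oshoot f (x - u))) ∧
    ((u < Ushoot f x ∧ v < Vshoot f x ∧ w < Oshoot f x) →
      tauPass f (x - u) = tauPass f x) :=
  statement0_general f hf_rc hf0 x hx hhit u v w hu0 hux hw
end

section
/- Let (Ω, F, P) be a probability space and let (Aₙ)ₙ∈ℕ and (Bₙ)ₙ∈ℕ be sequences of real-valued random variables on Ω such that Aₙ ≤ Bₙ almost surely for every n. Suppose there is a Borel probability measure μ on ℝ such that both the laws of Aₙ and the laws of Bₙ converge weakly to μ as n → ∞. Then Bₙ − Aₙ converges to 0 in probability, i.e. for every ε > 0, P(Bₙ − Aₙ > ε) → 0 as n → ∞. -/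
/-!
Clamping at level `K = M + 1 + ε`: if `|a| < M + 1` and `b - a > ε` then `clamp b - clamp a ≥ ε`.
Hence `1{B - A > ε} ≤ (clamp B - clamp A) / ε + h_M(A)`, where `h_M` is a continuous cutoff vanishing
on `[-M, M]` and equal to `1` off `(-M - 1, M + 1)`. Since `A ≤ B`, the right side is nonnegative, so
Markov's inequality bounds `P(B - A > ε)` by its expectation. As `A` and `B` have the same limit law,
that expectation tends to `∫ h_M dμ`, which is small for `M` large.
-/

open MeasureTheory Filter

noncomputable def clampBCF (K : ℝ) : BoundedContinuousFunction ℝ ℝ :=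
  .ofNormedAddCommGroup (fun x => max (-K) (min x K)) (by fun_prop) |K| fun x => by
    rw [Real.norm_eq_abs, abs_le]
    constructor
    · exact (neg_le_neg (le_abs_self K)).trans (le_max_left _ _)
    · exact max_le (neg_le_abs K) ((min_le_right _ _).trans (le_abs_self K))

theorem clampBCF_apply (K x : ℝ) : clampBCF K x = max (-K) (min x K) := rfl

theorem monotone_clampBCF (K : ℝ) : Monotone (clampBCF K) := fun _ _ h =>
  max_le_max le_rfl (min_le_min h le_rfl)

theorem clampBCF_of_abs_le {K x : ℝ} (h : |x| ≤ K) : clampBCF K x = x := by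
  rw [abs_le] at h
  rw [clampBCF_apply, min_eq_left h.2, max_eq_right h.1]

noncomputable def tailBCF (M : ℝ) : BoundedContinuousFunction ℝ ℝ :=
  .ofNormedAddCommGroup (fun x => min 1 (max 0 (|x| - M))) (by fun_prop) 1 fun x => by
    rw [Real.norm_eq_abs, abs_of_nonneg (le_min zero_le_one (le_max_left _ _))]
    exact min_le_left _ _

theorem tailBCF_apply (M x : ℝ) : tailBCF M x = min 1 (max 0 (|x| - M)) := rfl

theorem tailBCF_nonneg (M x : ℝ) : 0 ≤ tailBCF M x :=
  le_min zero_le_one (le_max_left _ _)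

theorem tailBCF_le_one (M x : ℝ) : tailBCF M x ≤ 1 := min_le_left _ _

theorem tailBCF_of_abs_le {M x : ℝ} (h : |x| ≤ M) : tailBCF M x = 0 := by
  rw [tailBCF_apply, max_eq_left (by linarith), min_eq_right zero_le_one]

theorem tailBCF_of_le_abs {M x : ℝ} (h : M + 1 ≤ |x|) : tailBCF M x = 1 := by
  rw [tailBCF_apply, min_eq_left (le_max_of_le_right (by linarith))]

theorem tendsto_integral_tailBCF (μ : Measure ℝ) [IsFiniteMeasure μ] :
    Tendsto (fun M => ∫ x, tailBCF M x ∂μ) atTop (nhds 0) := by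
  have h := tendsto_integral_filter_of_dominated_convergence (μ := μ) (l := atTop)
    (F := fun M x => tailBCF M x) (f := fun _ => 0) (fun _ => 1)
    (.of_forall fun M => (tailBCF M).continuous.aestronglyMeasurable)
    (.of_forall fun M => .of_forall fun x => by
      rw [Real.norm_of_nonneg (tailBCF_nonneg M x)]; exact tailBCF_le_one M x)
    (integrable_const 1)
    (.of_forall fun x => tendsto_const_nhds.congr'
      ((eventually_ge_atTop |x|).mono fun M hM => (tailBCF_of_abs_le hM).symm))
  simpa using h

theorem one_le_clampBCF_sub_div_add_tailBCF {a b ε M : ℝ} (hε : 0 < ε) (hgap : ε < b - a) :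
    1 ≤ (clampBCF (M + 1 + ε) b - clampBCF (M + 1 + ε) a) / ε + tailBCF M a := by
  have hclamp : 0 ≤ (clampBCF (M + 1 + ε) b - clampBCF (M + 1 + ε) a) / ε :=
    div_nonneg (sub_nonneg.2 (monotone_clampBCF _ (by linarith))) hε.le
  rcases le_or_gt (M + 1) |a| with ha | ha
  · rw [tailBCF_of_le_abs ha]
    linarith
  · have hshift : |a + ε| ≤ M + 1 + ε := (abs_add_le a ε).trans (by rw [abs_of_pos hε]; linarith)
    have hb : a + ε ≤ clampBCF (M + 1 + ε) b := by
      rw [← clampBCF_of_abs_le hshift]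
      exact monotone_clampBCF _ (by linarith)
    have hstep : 1 ≤ (clampBCF (M + 1 + ε) b - clampBCF (M + 1 + ε) a) / ε := by
      rw [clampBCF_of_abs_le (by linarith : |a| ≤ M + 1 + ε), le_div_iff₀ hε]
      linarith
    linarith [tailBCF_nonneg M a]

section

variable {Ω : Type*} [MeasurableSpace Ω] {P : Measure Ω} [IsFiniteMeasure P]

theorem BoundedContinuousFunction.integrable_comp_measurable {α : Type*} [TopologicalSpace α]
    [MeasurableSpace α] [OpensMeasurableSpace α] (g : BoundedContinuousFunction α ℝ) {X : Ω → α}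
    (hX : Measurable X) : Integrable (fun ω => g (X ω)) P :=
  (g.integrable (P.map X)).comp_measurable hX

theorem measureReal_gap_le_clamp_add_tail {X Y : Ω → ℝ} (hX : Measurable X) (hY : Measurable Y)
    (hle : ∀ᵐ ω ∂P, X ω ≤ Y ω) {ε : ℝ} (hε : 0 < ε) (M : ℝ) :
    P.real {ω | ε < Y ω - X ω} ≤
      (∫ ω, clampBCF (M + 1 + ε) (Y ω) ∂P - ∫ ω, clampBCF (M + 1 + ε) (X ω) ∂P) / ε +
        ∫ ω, tailBCF M (X ω) ∂P := by
  set G := clampBCF (M + 1 + ε)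
  have hGY := G.integrable_comp_measurable (P := P) hY
  have hGX := G.integrable_comp_measurable (P := P) hX
  have hHX := (tailBCF M).integrable_comp_measurable (P := P) hX
  have hint : Integrable (fun ω => (G (Y ω) - G (X ω)) / ε) P := (hGY.sub hGX).div_const ε
  have hnonneg : 0 ≤ᵐ[P] fun ω => (G (Y ω) - G (X ω)) / ε + tailBCF M (X ω) := by
    filter_upwards [hle] with ω hω
    exact add_nonneg (div_nonneg (sub_nonneg.2 (monotone_clampBCF _ hω)) hε.le)
      (tailBCF_nonneg M _)
  have hmarkov := mul_meas_ge_le_integral_of_nonneg hnonneg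
    (hint.add hHX) 1
  rw [one_mul, integral_add hint hHX, integral_div, integral_sub hGY hGX] at hmarkov
  exact (measureReal_mono fun ω hω => one_le_clampBCF_sub_div_add_tailBCF hε hω).trans hmarkov

end

theorem statement1 {Ω : Type*} [MeasurableSpace Ω] (P : Measure Ω) [IsProbabilityMeasure P]
    (A B : ℕ → Ω → ℝ)
    (hA : ∀ n, Measurable (A n)) (hB : ∀ n, Measurable (B n))
    (hle : ∀ n, ∀ᵐ ω ∂P, A n ω ≤ B n ω)
    (μ : Measure ℝ) [IsProbabilityMeasure μ]
    (hAconv : ∀ g : BoundedContinuousFunction ℝ ℝ,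
      Tendsto (fun n => ∫ ω, g (A n ω) ∂P) atTop (nhds (∫ x, g x ∂μ)))
    (hBconv : ∀ g : BoundedContinuousFunction ℝ ℝ,
      Tendsto (fun n => ∫ ω, g (B n ω) ∂P) atTop (nhds (∫ x, g x ∂μ))) :
    ∀ ε : ℝ, 0 < ε →
      Tendsto (fun n => (P {ω | ε < B n ω - A n ω}).toReal) atTop (nhds 0) := by
  intro ε hε
  rw [NormedAddGroup.tendsto_nhds_zero]
  intro δ hδ
  obtain ⟨M, hM⟩ := ((tendsto_integral_tailBCF μ).eventually_lt_const hδ).exists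
  set G := clampBCF (M + 1 + ε)
  have hbound := (((hBconv G).sub (hAconv G)).div_const ε).add (hAconv (tailBCF M))
  rw [sub_self, zero_div, zero_add] at hbound
  filter_upwards [hbound.eventually_lt_const hM] with n hn
  rw [Real.norm_of_nonneg ENNReal.toReal_nonneg]
  exact (measureReal_gap_le_clamp_add_tail (hA n) (hB n) (hle n) hε M).trans_lt hn
end

section
/- For all real numbers α ∈ (0,1), a > 0 and b > 0, one has ∫₀¹ y^{α−1} (a + max(1−y, b))^{−α} dy = ∫_b^∞ (1 − (max(1−v, 0))^α) (v+a)^{−(α+1)} dv. -/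
/-!
For `b ≥ 1` both sides equal `(a + b) ^ (-α) / α`. For `b < 1` split the left side at the
kink `y = 1 - b` of the maximum, and write the right side as `∫_b^∞ (v + a) ^ (-α-1)` minus
the integral of `(1 - v) ^ α (v + a) ^ (-α-1)` over `(b, 1]`. After the substitution
`y = 1 - v` the two non-elementary pieces, `y ^ (α-1) (a + 1 - y) ^ (-α)` and
`y ^ α (a + 1 - y) ^ (-α-1)`, add up to `α⁻¹ d/dy [y ^ α (a + 1 - y) ^ (-α)]`, so their
integrals over `(0, 1 - b)` sum to `(1 - b) ^ α (a + b) ^ (-α) / α`.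
-/

open MeasureTheory Real Set intervalIntegral

lemma setIntegral_Ioi_comp_add_right {E : Type*} [NormedAddCommGroup E] [NormedSpace ℝ E]
    (f : ℝ → E) (c d : ℝ) : ∫ x in Ioi c, f (x + d) = ∫ x in Ioi (c + d), f x := by
  have h := (measurePreserving_add_right volume d).setIntegral_preimage_emb
    (measurableEmbedding_addRight d) f (Ioi (c + d))
  rwa [preimage_add_const_Ioi, add_sub_cancel_right] at h

section

variable {α a b : ℝ}

lemma integral_Ioi_add_rpow_neg_succ (hα : 0 < α) (hba : 0 < b + a) :
    ∫ v in Ioi b, (v + a) ^ (-(α + 1)) = (b + a) ^ (-α) / α := by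
  rw [setIntegral_Ioi_comp_add_right (fun t => t ^ (-(α + 1))),
    integral_Ioi_rpow_of_lt (by linarith) hba, show -(α + 1) + 1 = -α by ring, neg_div,
    div_neg, neg_neg]

lemma hasDerivAt_rpow_mul_sub_rpow_neg_div (hα : α ≠ 0) {d x : ℝ} (hx : 0 < x) (hxd : x < d) :
    HasDerivAt (fun y => y ^ α * (d - y) ^ (-α) / α)
      (x ^ (α - 1) * (d - x) ^ (-α) + x ^ α * (d - x) ^ (-(α + 1))) x := by
  have hpow := hasDerivAt_rpow_const (p := α) (Or.inl hx.ne')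
  have hsub := ((hasDerivAt_id x).const_sub d).rpow_const (p := -α) (Or.inl (sub_pos.2 hxd).ne')
  refine ((hpow.mul hsub).div_const α).congr_deriv ?_
  simp only [id, show -α - 1 = -(α + 1) by ring]
  field_simp

lemma integral_rpow_sub_one_mul_sub_rpow_neg_add (hα : 0 < α) {c d : ℝ} (hc : 0 ≤ c)
    (hcd : c < d) :
    (∫ y in 0..c, y ^ (α - 1) * (d - y) ^ (-α)) + ∫ y in 0..c, y ^ α * (d - y) ^ (-(α + 1))
      = c ^ α * (d - c) ^ (-α) / α := by
  have hsub_pos : ∀ y ∈ uIcc 0 c, d - y ≠ 0 := fun y hy => by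
    rw [uIcc_of_le hc] at hy
    linarith [hy.2]
  have hsub_cont (p : ℝ) : ContinuousOn (fun y => (d - y) ^ p) (uIcc 0 c) :=
    (continuousOn_const.sub continuousOn_id).rpow_const fun y hy => Or.inl (hsub_pos y hy)
  have hI₁ : IntervalIntegrable (fun y => y ^ (α - 1) * (d - y) ^ (-α)) volume 0 c :=
    (intervalIntegrable_rpow' (by linarith)).mul_continuousOn (hsub_cont _)
  have hI₂ : IntervalIntegrable (fun y => y ^ α * (d - y) ^ (-(α + 1))) volume 0 c :=
    (intervalIntegrable_rpow' (by linarith)).mul_continuousOn (hsub_cont _)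
  have hcont : ContinuousOn (fun y => y ^ α * (d - y) ^ (-α) / α) (Icc 0 c) := by
    rw [← uIcc_of_le hc]
    exact ((continuousOn_id.rpow_const fun _ _ => Or.inr hα.le).mul (hsub_cont _)).div_const α
  rw [← integral_add hI₁ hI₂, integral_eq_sub_of_hasDerivAt_of_le hc hcont
      (fun x hx => hasDerivAt_rpow_mul_sub_rpow_neg_div hα.ne' hx.1 (hx.2.trans hcd))
      (hI₁.add hI₂), zero_rpow hα.ne', zero_mul, zero_div, sub_zero]

lemma integral_Ioi_one_sub_max_rpow_mul (hα : 0 < α) (hb : 0 ≤ b) (hba : 0 < b + a) :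
    ∫ v in Ioi b, (1 - max (1 - v) 0 ^ α) * (v + a) ^ (-(α + 1))
      = (b + a) ^ (-α) / α - ∫ v in Ioi b, max (1 - v) 0 ^ α * (v + a) ^ (-(α + 1)) := by
  have hf : IntegrableOn (fun v => (v + a) ^ (-(α + 1))) (Ioi b) :=
    integrableOn_add_rpow_Ioi_of_lt (by linarith) (by linarith)
  have hg : IntegrableOn (fun v => max (1 - v) 0 ^ α * (v + a) ^ (-(α + 1))) (Ioi b) := by
    refine hf.mono' ?_ ?_
    · exact (by fun_prop : Measurable _).aestronglyMeasurable
    · filter_upwards [ae_restrict_mem measurableSet_Ioi] with v hv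
      have hva : 0 < v + a := by linarith [mem_Ioi.1 hv]
      have hf_nonneg := rpow_nonneg hva.le (-(α + 1))
      rw [norm_of_nonneg (mul_nonneg (rpow_nonneg (le_max_right _ _) _) hf_nonneg)]
      exact mul_le_of_le_one_left hf_nonneg
        (rpow_le_one (le_max_right _ _) (max_le (by linarith [mem_Ioi.1 hv]) zero_le_one) hα.le)
  simp_rw [sub_mul, one_mul]
  rw [integral_sub hf hg, integral_Ioi_add_rpow_neg_succ hα hba]

lemma integral_Ioi_max_one_sub_rpow_mul_of_one_le (hα : 0 < α) (hb1 : 1 ≤ b) :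
    ∫ v in Ioi b, max (1 - v) 0 ^ α * (v + a) ^ (-(α + 1)) = 0 := by
  refine setIntegral_eq_zero_of_forall_eq_zero fun v hv => ?_
  rw [max_eq_right (by linarith [mem_Ioi.1 hv]), zero_rpow hα.ne', zero_mul]

lemma integral_Ioi_max_one_sub_rpow_mul_of_lt_one (hα : 0 < α) (hb1 : b < 1) :
    ∫ v in Ioi b, max (1 - v) 0 ^ α * (v + a) ^ (-(α + 1))
      = ∫ y in 0..1 - b, y ^ α * (a + 1 - y) ^ (-(α + 1)) := by
  rw [setIntegral_eq_of_subset_of_forall_sdiff_eq_zero measurableSet_Ioi Ioc_subset_Ioi_self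
      fun v hv => ?_, ← integral_of_le hb1.le]
  · have h := integral_comp_sub_left (fun y => y ^ α * (a + 1 - y) ^ (-(α + 1)))
      (a := b) (b := 1) 1
    rw [sub_self] at h
    rw [← h]
    refine integral_congr fun v hv => ?_
    rw [uIcc_of_le hb1.le] at hv
    simp only [max_eq_left (sub_nonneg.2 hv.2), show a + 1 - (1 - v) = v + a by ring]
  · have hv1 : 1 < v := not_le.1 fun h => hv.2 ⟨hv.1, h⟩
    rw [max_eq_right (by linarith), zero_rpow hα.ne', zero_mul]

lemma integral_rpow_sub_one (hα : 0 < α) (c : ℝ) :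
    ∫ y in c..1, y ^ (α - 1) = (1 - c ^ α) / α := by
  rw [integral_rpow (Or.inl (by linarith)), sub_add_cancel, one_rpow]

lemma integral_Ioo_rpow_mul_add_max_rpow_of_one_le (hα : 0 < α) (hb1 : 1 ≤ b) :
    ∫ y in Ioo 0 1, y ^ (α - 1) * (a + max (1 - y) b) ^ (-α) = (a + b) ^ (-α) / α := by
  have h : EqOn (fun y => y ^ (α - 1) * (a + max (1 - y) b) ^ (-α))
      (fun y => y ^ (α - 1) * (a + b) ^ (-α)) (Ioo 0 1) := fun y hy => by
    simp only [max_eq_right (by linarith [hy.1] : 1 - y ≤ b)]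
  rw [setIntegral_congr_fun measurableSet_Ioo h, MeasureTheory.integral_mul_const,
    ← integral_Ioc_eq_integral_Ioo, ← integral_of_le zero_le_one, integral_rpow_sub_one hα,
    zero_rpow hα.ne', sub_zero]
  ring

lemma integral_Ioo_rpow_mul_add_max_rpow_of_lt_one (hα : 0 < α) (hb : 0 ≤ b) (hab : 0 < a + b)
    (hb1 : b < 1) :
    ∫ y in Ioo 0 1, y ^ (α - 1) * (a + max (1 - y) b) ^ (-α)
      = (∫ y in 0..1 - b, y ^ (α - 1) * (a + 1 - y) ^ (-α))
        + (1 - (1 - b) ^ α) / α * (a + b) ^ (-α) := by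
  have hg : Continuous fun y => (a + max (1 - y) b) ^ (-α) :=
    (continuous_const.add ((continuous_const.sub continuous_id).max continuous_const)).rpow_const
      fun y => Or.inl (show 0 < a + max (1 - y) b by linarith [le_max_right (1 - y) b]).ne'
  have hint (s t : ℝ) :
      IntervalIntegrable (fun y => y ^ (α - 1) * (a + max (1 - y) b) ^ (-α)) volume s t :=
    (intervalIntegrable_rpow' (by linarith)).mul_continuousOn hg.continuousOn
  rw [← integral_Ioc_eq_integral_Ioo, ← integral_of_le zero_le_one,
    ← integral_add_adjacent_intervals (hint 0 (1 - b)) (hint (1 - b) 1)]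
  congr 1
  · refine integral_congr fun y hy => ?_
    rw [uIcc_of_le (by linarith)] at hy
    simp only [max_eq_left (by linarith [hy.2] : b ≤ 1 - y), add_sub_assoc]
  · rw [← integral_rpow_sub_one hα, ← intervalIntegral.integral_mul_const]
    refine integral_congr fun y hy => ?_
    rw [uIcc_of_le (by linarith)] at hy
    simp only [max_eq_right (by linarith [hy.1] : 1 - y ≤ b)]

end

theorem statement5_general (α a b : ℝ) (hα : 0 < α) (ha : 0 < a) (hb : 0 < b) :
    (∫ y in Ioo (0:ℝ) 1, y ^ (α - 1) * (a + max (1 - y) b) ^ (-α))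
      = ∫ v in Ioi b, (1 - (max (1 - v) 0) ^ α) * (v + a) ^ (-(α + 1)) := by
  rw [integral_Ioi_one_sub_max_rpow_mul hα hb.le (by linarith), add_comm b a]
  rcases le_or_gt 1 b with hb1 | hb1
  · rw [integral_Ioo_rpow_mul_add_max_rpow_of_one_le hα hb1,
      integral_Ioi_max_one_sub_rpow_mul_of_one_le hα hb1, sub_zero]
  · have key := integral_rpow_sub_one_mul_sub_rpow_neg_add hα (c := 1 - b) (d := a + 1)
      (by linarith) (by linarith)
    rw [show a + 1 - (1 - b) = a + b by ring] at key
    rw [integral_Ioo_rpow_mul_add_max_rpow_of_lt_one hα hb.le (by linarith) hb1,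
      integral_Ioi_max_one_sub_rpow_mul_of_lt_one hα hb1]
    linear_combination key

theorem statement5 (α a b : ℝ) (hα : 0 < α) (hα1 : α < 1) (ha : 0 < a) (hb : 0 < b) :
    (∫ y in Ioo (0:ℝ) 1, y ^ (α - 1) * (a + max (1 - y) b) ^ (-α))
      = ∫ v in Ioi b, (1 - (max (1 - v) 0) ^ α) * (v + a) ^ (-(α + 1)) :=
  statement5_general α a b hα ha hb
end

section
/- For all real numbers a, b with 0 < a < 1, 0 < b < 1, and every x > 0, the triple integral ∫₀ˣ ∫₀^∞ ∫₀^w (x−y)^{a−1} (w−u)^{b−1} (w+y)^{−(a+b+1)} du dw dy equals π Γ(a) Γ(b) / (sin(πa) Γ(a+b+1)); in particular the value does not depend on x. -/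
/-!
Integrate from the inside out. The `u`-integral is `w ^ b / b`. Scaling `w = y s` and substituting
`s = t / (1 - t)` turns the `w`-integral into `y ^ (-a) B(b + 1, a)`, and scaling `y = x t` turns
the `y`-integral of `(x - y) ^ (a - 1) y ^ (-a)` into `x ^ 0 B(1 - a, a) = π / sin (π a)` by the
reflection formula. Finally `Γ(b + 1) = b Γ(b)`.
-/

open MeasureTheory Real Set
open ProbabilityTheory (beta)

theorem integral_Ioo_rpow_mul_one_sub_rpow {p q : ℝ} (hp : 0 < p) (hq : 0 < q) :
    ∫ t in Ioo (0:ℝ) 1, t ^ (p - 1) * (1 - t) ^ (q - 1) = beta p q := by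
  have hC : Complex.betaIntegral p q
      = ↑(∫ t in Ioo (0:ℝ) 1, t ^ (p - 1) * (1 - t) ^ (q - 1)) := by
    rw [Complex.betaIntegral, intervalIntegral.integral_of_le zero_le_one,
      integral_Ioc_eq_integral_Ioo]
    refine Eq.trans ?_ integral_complex_ofReal
    refine setIntegral_congr_fun measurableSet_Ioo fun t ht => ?_
    rw [Complex.ofReal_mul, Complex.ofReal_cpow ht.1.le, Complex.ofReal_cpow (sub_nonneg.2 ht.2.le)]
    push_cast
    rfl
  rw [ProbabilityTheory.beta_eq_betaIntegralReal p q hp hq, hC, Complex.ofReal_re]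

theorem integral_Ioo_sub_rpow {b w : ℝ} (hb : 0 < b) (hw : 0 < w) :
    ∫ u in Ioo (0:ℝ) w, (w - u) ^ (b - 1) = w ^ b / b := by
  rw [← integral_Ioc_eq_integral_Ioo, ← intervalIntegral.integral_of_le hw.le,
    intervalIntegral.integral_comp_sub_left (fun t => t ^ (b - 1)) w, sub_self, sub_zero,
    integral_rpow (Or.inl (by linarith)), sub_add_cancel, zero_rpow hb.ne', sub_zero]

theorem integral_Ioi_rpow_mul_one_add_rpow {p q : ℝ} (hp : 0 < p) (hq : 0 < q) :
    ∫ s in Ioi (0:ℝ), s ^ (p - 1) * (1 + s) ^ (-(p + q)) = beta p q := by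
  have himg : (fun t : ℝ => t / (1 - t)) '' Ioo 0 1 = Ioi 0 := by
    ext s
    simp only [mem_image, mem_Ioo, mem_Ioi]
    constructor
    · rintro ⟨t, ⟨ht0, ht1⟩, rfl⟩
      exact div_pos ht0 (sub_pos.2 ht1)
    · intro hs
      refine ⟨s / (1 + s), ⟨by positivity, (div_lt_one (by linarith)).2 (by linarith)⟩, ?_⟩
      field_simp
      ring
  have hderiv : ∀ t ∈ Ioo (0:ℝ) 1,
      HasDerivWithinAt (fun t : ℝ => t / (1 - t)) (((1 - t) ^ 2)⁻¹) (Ioo 0 1) t := by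
    intro t ht
    have h1t : (1:ℝ) - t ≠ 0 := (sub_pos.2 ht.2).ne'
    have h : HasDerivAt (fun s : ℝ => s / (1 - s))
        ((1 * (1 - t) - t * (0 - 1)) / (1 - t) ^ 2) t :=
      (hasDerivAt_id' t).div ((hasDerivAt_const t 1).sub (hasDerivAt_id' t)) h1t
    refine (h.congr_deriv ?_).hasDerivWithinAt
    field_simp
    ring
  have hinj : InjOn (fun t : ℝ => t / (1 - t)) (Ioo 0 1) := by
    intro t₁ h₁ t₂ h₂ heq
    have e₁ : (1:ℝ) - t₁ ≠ 0 := (sub_pos.2 h₁.2).ne'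
    have e₂ : (1:ℝ) - t₂ ≠ 0 := (sub_pos.2 h₂.2).ne'
    simp only at heq
    field_simp at heq
    linarith
  rw [← himg, integral_image_eq_integral_abs_deriv_smul measurableSet_Ioo hderiv hinj,
    ← integral_Ioo_rpow_mul_one_sub_rpow hp hq]
  refine setIntegral_congr_fun measurableSet_Ioo fun t ht => ?_
  have h1t : 0 < 1 - t := sub_pos.2 ht.2
  have hsum : 1 + t / (1 - t) = (1 - t)⁻¹ := by field_simp; ring
  rw [abs_of_pos (by positivity), smul_eq_mul, hsum, inv_rpow h1t.le, ← rpow_neg h1t.le, neg_neg,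
    div_rpow ht.1.le h1t.le, div_eq_mul_inv, ← rpow_neg h1t.le, ← rpow_natCast,
    ← rpow_neg h1t.le]
  have hexp : (1 - t) ^ (-((2:ℕ):ℝ)) * ((1 - t) ^ (-(p - 1)) * (1 - t) ^ (p + q))
      = (1 - t) ^ (q - 1) := by
    rw [← rpow_add h1t, ← rpow_add h1t]
    ring_nf
  rw [← hexp]
  ring

theorem integral_Ioi_rpow_mul_add_rpow {p q y : ℝ} (hp : 0 < p) (hq : 0 < q) (hy : 0 < y) :
    ∫ w in Ioi (0:ℝ), w ^ (p - 1) * (w + y) ^ (-(p + q)) = y ^ (-q) * beta p q := by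
  have hscale :=
    integral_comp_mul_left_Ioi' (fun w : ℝ => w ^ (p - 1) * (w + y) ^ (-(p + q))) 0 hy
  rw [mul_zero] at hscale
  have hpoint : ∀ s ∈ Ioi (0:ℝ), (y * s) ^ (p - 1) * (y * s + y) ^ (-(p + q))
      = y ^ (-q - 1) * (s ^ (p - 1) * (1 + s) ^ (-(p + q))) := by
    intro s hs
    rw [show y * s + y = y * (1 + s) by ring, mul_rpow hy.le (le_of_lt hs),
      mul_rpow hy.le (by linarith [mem_Ioi.1 hs]), show -q - 1 = (p - 1) + -(p + q) by ring,
      rpow_add hy]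
    ring
  rw [← hscale, setIntegral_congr_fun measurableSet_Ioi hpoint, integral_const_mul,
    integral_Ioi_rpow_mul_one_add_rpow hp hq, smul_eq_mul, ← mul_assoc, mul_comm y,
    ← rpow_add_one hy.ne', sub_add_cancel]

theorem integral_Ioo_sub_rpow_mul_rpow {p q x : ℝ} (hp : 0 < p) (hq : 0 < q) (hx : 0 < x) :
    ∫ y in Ioo (0:ℝ) x, (x - y) ^ (q - 1) * y ^ (p - 1) = x ^ (p + q - 1) * beta p q := by
  have hscale := intervalIntegral.mul_integral_comp_mul_left
    (f := fun y : ℝ => (x - y) ^ (q - 1) * y ^ (p - 1)) (a := 0) (b := 1) (c := x)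
  rw [mul_zero, mul_one, intervalIntegral.integral_of_le zero_le_one,
    intervalIntegral.integral_of_le hx.le, integral_Ioc_eq_integral_Ioo,
    integral_Ioc_eq_integral_Ioo] at hscale
  have hpoint : ∀ t ∈ Ioo (0:ℝ) 1, (x - x * t) ^ (q - 1) * (x * t) ^ (p - 1)
      = x ^ (p + q - 1 - 1) * (t ^ (p - 1) * (1 - t) ^ (q - 1)) := by
    intro t ht
    rw [show x - x * t = x * (1 - t) by ring, mul_rpow hx.le (sub_pos.2 ht.2).le,
      mul_rpow hx.le ht.1.le, show p + q - 1 - 1 = (q - 1) + (p - 1) by ring, rpow_add hx]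
    ring
  rw [← hscale, setIntegral_congr_fun measurableSet_Ioo hpoint, integral_const_mul,
    integral_Ioo_rpow_mul_one_sub_rpow hp hq, ← mul_assoc, mul_comm x,
    ← rpow_add_one hx.ne', sub_add_cancel]

theorem integral_Ioi_integral_Ioo_sub_rpow_mul_add_rpow {a b y : ℝ} (ha : 0 < a) (hb : 0 < b)
    (hy : 0 < y) :
    ∫ w in Ioi (0:ℝ), ∫ u in Ioo (0:ℝ) w, (w - u) ^ (b - 1) * (w + y) ^ (-(a + b + 1))
      = y ^ (-a) * beta (b + 1) a / b := by
  have hinner : ∀ w ∈ Ioi (0:ℝ),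
      ∫ u in Ioo (0:ℝ) w, (w - u) ^ (b - 1) * (w + y) ^ (-(a + b + 1))
      = b⁻¹ * (w ^ (b + 1 - 1) * (w + y) ^ (-(b + 1 + a))) := by
    intro w hw
    rw [integral_mul_const, integral_Ioo_sub_rpow hb hw, add_sub_cancel_right,
      show a + b + 1 = b + 1 + a by ring]
    ring
  rw [setIntegral_congr_fun measurableSet_Ioi hinner, integral_const_mul,
    integral_Ioi_rpow_mul_add_rpow (by linarith) ha hy]
  ring

theorem statement7_general (a b x : ℝ) (ha : 0 < a) (ha1 : a < 1) (hb : 0 < b)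
    (hx : 0 < x) :
    (∫ y in Ioo (0:ℝ) x, ∫ w in Ioi (0:ℝ), ∫ u in Ioo (0:ℝ) w,
        (x - y) ^ (a - 1) * (w - u) ^ (b - 1) * (w + y) ^ (-(a + b + 1)))
      = π * Gamma a * Gamma b / (Real.sin (π * a) * Gamma (a + b + 1)) := by
  have hinner : ∀ y ∈ Ioo (0:ℝ) x, ∫ w in Ioi (0:ℝ), ∫ u in Ioo (0:ℝ) w,
      (x - y) ^ (a - 1) * (w - u) ^ (b - 1) * (w + y) ^ (-(a + b + 1))
        = beta (b + 1) a / b * ((x - y) ^ (a - 1) * y ^ (1 - a - 1)) := by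
    intro y hy
    simp_rw [mul_assoc, integral_const_mul]
    rw [integral_Ioi_integral_Ioo_sub_rpow_mul_add_rpow ha hb hy.1, sub_sub_cancel_left]
    ring
  rw [setIntegral_congr_fun measurableSet_Ioo hinner, integral_const_mul,
    integral_Ioo_sub_rpow_mul_rpow (sub_pos.2 ha1) ha hx, sub_add_cancel, sub_self, rpow_zero,
    one_mul]
  have hsin : 0 < Real.sin (π * a) :=
    sin_pos_of_pos_of_lt_pi (by positivity) (by nlinarith [pi_pos])
  have hGamma : 0 < Gamma (a + b + 1) := Gamma_pos_of_pos (by linarith)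
  simp only [beta]
  rw [Gamma_add_one hb.ne', sub_add_cancel, Gamma_one, mul_comm (Gamma (1 - a)),
    Gamma_mul_Gamma_one_sub, show b + 1 + a = a + b + 1 by ring]
  field_simp

theorem statement7 (a b x : ℝ) (ha : 0 < a) (ha1 : a < 1) (hb : 0 < b) (hb1 : b < 1)
    (hx : 0 < x) :
    (∫ y in Ioo (0:ℝ) x, ∫ w in Ioi (0:ℝ), ∫ u in Ioo (0:ℝ) w,
        (x - y) ^ (a - 1) * (w - u) ^ (b - 1) * (w + y) ^ (-(a + b + 1)))
      = π * Gamma a * Gamma b / (Real.sin (π * a) * Gamma (a + b + 1)) :=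
  statement7_general a b x ha ha1 hb hx
end

section
/- For all real numbers ϱ ∈ (0,1), γ > 0 and x > 0, the double integral ∫ₓ^∞ e^u (e^u − 1)^{−(γ+1)} ( ∫_{u−x}^∞ e^z (e^z − 1)^{−(ϱ+1)} dz ) du equals [Γ(γ+ϱ) Γ(1−ϱ) / (ϱ Γ(γ+1))] · (e^x − 1)^{−γ} (1 − e^{−x})^{−ϱ}. -/
/-!
The inner integral is explicit: it equals `(e^(u - x) - 1)^(-ϱ) / ϱ`. With `c = e^x - 1`, the
substitution `u = log (1 + c / t)` maps `(0, 1)` onto `(x, ∞)` and turns the outer integral into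
`(e^x - 1)^(-γ) (1 - e^(-x))^(-ϱ) / ϱ` times the Beta integral `B(γ + ϱ, 1 - ϱ)`.
-/

open MeasureTheory Real Set Filter Topology

theorem integral_Ioi_exp_mul_exp_sub_one_rpow {ϱ a : ℝ} (hϱ : 0 < ϱ) (ha : 0 < a) :
    ∫ z in Ioi a, exp z * (exp z - 1) ^ (-(ϱ + 1)) = (exp a - 1) ^ (-ϱ) / ϱ := by
  have hpos : ∀ z ∈ Ici a, 0 < exp z - 1 := fun z hz =>
    sub_pos.2 (one_lt_exp_iff.2 (ha.trans_le hz))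
  have hderiv : ∀ z ∈ Ici a, HasDerivAt (fun z => -((exp z - 1) ^ (-ϱ) / ϱ))
      (exp z * (exp z - 1) ^ (-(ϱ + 1))) z := by
    intro z hz
    refine ((((hasDerivAt_exp z).sub_const 1).rpow_const
      (Or.inl (hpos z hz).ne')).div_const ϱ).neg.congr_deriv ?_
    rw [show -ϱ - 1 = -(ϱ + 1) by ring]
    field_simp
  have hlim : Tendsto (fun z => -((exp z - 1) ^ (-ϱ) / ϱ)) atTop (𝓝 0) := by
    simpa [sub_eq_add_neg] using (((tendsto_rpow_neg_atTop hϱ).comp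
      (tendsto_atTop_add_const_right _ (-1) tendsto_exp_atTop)).div_const ϱ).neg
  rw [integral_Ioi_of_hasDerivAt_of_nonneg' hderiv
    (fun z hz => mul_nonneg (exp_pos z).le (rpow_nonneg (hpos z (mem_Ici_of_Ioi hz)).le _)) hlim]
  ring

open ProbabilityTheory in
theorem integral_Ioo_rpow_mul_one_sub_rpow_s14 {α β : ℝ} (hα : 0 < α) (hβ : 0 < β) :
    ∫ t in Ioo (0 : ℝ) 1, t ^ (α - 1) * (1 - t) ^ (β - 1)
      = Gamma α * Gamma β / Gamma (α + β) := by
  have hB := beta_pos hα hβ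
  have h : ∫ t in Ioo (0 : ℝ) 1, 1 / beta α β * t ^ (α - 1) * (1 - t) ^ (β - 1) = 1 := by
    rw [integral_eq_lintegral_of_nonneg_ae, ← lintegral_betaPDF,
      lintegral_betaPDF_eq_one hα hβ, ENNReal.toReal_one]
    · refine ae_restrict_of_forall_mem measurableSet_Ioo fun t ⟨ht0, ht1⟩ => ?_
      have := sub_pos.2 ht1
      positivity
    · exact Measurable.aestronglyMeasurable (by fun_prop)
  simp_rw [mul_assoc, integral_const_mul] at h
  rw [← beta]
  field_simp at h
  exact h

theorem strictAntiOn_log_one_add_div {c : ℝ} (hc : 0 < c) :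
    StrictAntiOn (fun t => log (1 + c / t)) (Ioi 0) := by
  intro s hs t ht hst
  have hs' : (0 : ℝ) < s := hs
  have ht' : (0 : ℝ) < t := ht
  exact log_lt_log (by positivity) (by gcongr)

theorem image_log_one_add_div_Ioo {c : ℝ} (hc : 0 < c) :
    (fun t => log (1 + c / t)) '' Ioo 0 1 = Ioi (log (1 + c)) := by
  refine Subset.antisymm ?_ fun u hu => ?_
  · rintro _ ⟨t, ⟨ht0, ht1⟩, rfl⟩
    simpa using strictAntiOn_log_one_add_div hc ht0 (show (0 : ℝ) < 1 by norm_num) ht1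
  · have hu' : 1 + c < exp u := by rwa [mem_Ioi, log_lt_iff_lt_exp (by positivity)] at hu
    have hpos : 0 < exp u - 1 := by linarith
    refine ⟨c / (exp u - 1), ⟨by positivity, by rw [div_lt_one hpos]; linarith⟩, ?_⟩
    simp only
    rw [div_div_cancel₀ hc.ne', add_sub_cancel, log_exp]

theorem integral_Ioi_log_one_add_eq_integral_Ioo {c : ℝ} (hc : 0 < c) (g : ℝ → ℝ) :
    ∫ u in Ioi (log (1 + c)), g u
      = ∫ t in Ioo (0 : ℝ) 1, c / (t * (t + c)) * g (log (1 + c / t)) := by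
  have hderiv : ∀ t ∈ Ioo (0 : ℝ) 1, HasDerivWithinAt (fun t => log (1 + c / t))
      (-(c / (t * (t + c)))) (Ioo 0 1) t := by
    rintro t ⟨ht0, -⟩
    refine ((((hasDerivAt_const t c).div (hasDerivAt_id t) ht0.ne').const_add 1).log
      (by simp only [Pi.div_apply, id]; positivity)).hasDerivWithinAt.congr_deriv ?_
    simp only [Pi.div_apply, id]
    field_simp
    ring
  rw [← image_log_one_add_div_Ioo hc, integral_image_eq_integral_abs_deriv_smul measurableSet_Ioo
    hderiv ((strictAntiOn_log_one_add_div hc).injOn.mono Ioo_subset_Ioi_self)]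
  refine setIntegral_congr_fun measurableSet_Ioo fun t ⟨ht0, _⟩ => ?_
  rw [abs_neg, abs_of_pos (by positivity), smul_eq_mul]

/-- The outer integrand at `u = log (1 + c / t)`, where `e^u = 1 + c / t` and `e^x = 1 + c`,
times the Jacobian `c / (t (t + c))`. -/
theorem integrand_log_one_add_div_eq {c t γ ϱ : ℝ} (hc : 0 < c) (ht0 : 0 < t) (ht1 : t < 1) :
    c / (t * (t + c)) *
        ((1 + c / t) * (c / t) ^ (-(γ + 1)) * (((1 + c / t) / (1 + c) - 1) ^ (-ϱ) / ϱ))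
      = c ^ (-γ) * (c / (1 + c)) ^ (-ϱ) / ϱ * (t ^ (γ + ϱ - 1) * (1 - t) ^ (1 - ϱ - 1)) := by
  have h1t : 0 < 1 - t := by linarith
  have hshift : (1 + c / t) / (1 + c) - 1 = c / (1 + c) * ((1 - t) / t) := by
    field_simp; ring
  rw [hshift, mul_rpow (by positivity) (by positivity), div_rpow h1t.le ht0.le,
    div_rpow hc.le ht0.le, show 1 - ϱ - 1 = -ϱ by ring, rpow_neg ht0.le, rpow_neg h1t.le,
    rpow_neg ht0.le, rpow_neg hc.le, rpow_neg hc.le, rpow_add hc, rpow_add ht0, rpow_sub ht0,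
    rpow_add ht0, rpow_one, rpow_one]
  field_simp

theorem statement14 (ϱ γ x : ℝ) (hϱ : 0 < ϱ) (hϱ1 : ϱ < 1) (hγ : 0 < γ) (hx : 0 < x) :
    (∫ u in Ioi x, Real.exp u * (Real.exp u - 1) ^ (-(γ + 1)) *
        ∫ z in Ioi (u - x), Real.exp z * (Real.exp z - 1) ^ (-(ϱ + 1)))
      = Gamma (γ + ϱ) * Gamma (1 - ϱ) / (ϱ * Gamma (γ + 1))
          * ((Real.exp x - 1) ^ (-γ) * (1 - Real.exp (-x)) ^ (-ϱ)) := by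
  set c := exp x - 1
  have hc : 0 < c := sub_pos.2 (one_lt_exp_iff.2 hx)
  have hexp : exp x = 1 + c := by ring
  have hsubst := integral_Ioi_log_one_add_eq_integral_Ioo hc
    (fun u => exp u * (exp u - 1) ^ (-(γ + 1)) * ((exp (u - x) - 1) ^ (-ϱ) / ϱ))
  rw [← hexp, log_exp] at hsubst
  calc _ = ∫ u in Ioi x, exp u * (exp u - 1) ^ (-(γ + 1)) * ((exp (u - x) - 1) ^ (-ϱ) / ϱ) :=
        setIntegral_congr_fun measurableSet_Ioi fun u hu => by
          rw [integral_Ioi_exp_mul_exp_sub_one_rpow hϱ (sub_pos.2 hu)]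
    _ = ∫ t in Ioo (0 : ℝ) 1, c ^ (-γ) * (c / (1 + c)) ^ (-ϱ) / ϱ *
          (t ^ (γ + ϱ - 1) * (1 - t) ^ (1 - ϱ - 1)) := by
        rw [hsubst]
        refine setIntegral_congr_fun measurableSet_Ioo fun t ⟨ht0, ht1⟩ => ?_
        rw [exp_sub, exp_log (by positivity), hexp, add_sub_cancel_left]
        exact integrand_log_one_add_div_eq hc ht0 ht1
    _ = _ := by
        rw [integral_const_mul, integral_Ioo_rpow_mul_one_sub_rpow_s14 (by linarith) (by linarith),
          show γ + ϱ + (1 - ϱ) = γ + 1 by ring, exp_neg, hexp,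
          show 1 - (1 + c)⁻¹ = c / (1 + c) by field_simp; ring]
        field_simp
end
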